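/- Theorem 3.1: Let G be a symmetric 2×2 real matrix and F = J · G the matrix of the associated operator. If (tr F)² > 4·det F, then there exist an invertible 2×2 real matrix S and real numbers a, b with b ≠ −a such that Sᵀ · J · S = J and Sᵀ · G · S = diag(a, b); i.e., the two metrics are given by the matrices diag(1, −1) and diag(a, b) with a + b ≠ 0 in a basis composed of eigenvectors of the associated operator. -/

import Mathlib

/-!
A Lorentz boost `S` (columns `(cosh t, sinh t)` and `(sinh t, cosh t)`) preserves `J`, and the
off-diagonal entry of `Sᵀ G S` is `((p + r) sinh 2t + 2q cosh 2t) / 2` for `G = !![p, q; q, r]`.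
The discriminant of `F = J G` is `(p + r)² - 4q²`, so when it is positive `tanh 2t = -2q / (p + r)`
is solvable and the boost diagonalises `G`. Since `J² = 1` and `Sᵀ J S = J`, the identity
`Sᵀ G S = D` turns into `F S = S (J D)`: the columns of `S` are eigenvectors of `F`, and
`J D = diag(a, -b)` has the same discriminant `(a + b)²` as `F`, which is therefore nonzero.
-/

open Matrix

def Jmat : Matrix (Fin 2) (Fin 2) ℝ := !![1, 0; 0, -1]

namespace Matrix

variable {n R : Type*} [Fintype n] [DecidableEq n] [CommRing R]

theorem mul_mul_transpose_mul_eq_one {J S : Matrix n n R} (hJ : J * J = 1)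
    (hS : Sᵀ * J * S = J) : S * (J * Sᵀ * J) = 1 :=
  mul_eq_one_comm.mp <| by
    rw [Matrix.mul_assoc, Matrix.mul_assoc, ← Matrix.mul_assoc Sᵀ, hS, hJ]

theorem isUnit_of_transpose_mul_mul_eq {J S : Matrix n n R} (hJ : J * J = 1)
    (hS : Sᵀ * J * S = J) : IsUnit S :=
  (isUnit_iff_isUnit_det S).mpr <|
    isUnit_det_of_right_inverse (mul_mul_transpose_mul_eq_one hJ hS)

theorem mul_mul_eq_mul_mul_of_transpose_mul_mul_eq {J S G D : Matrix n n R}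
    (hJ : J * J = 1) (hS : Sᵀ * J * S = J) (hD : Sᵀ * G * S = D) :
    J * G * S = S * (J * D) :=
  calc J * G * S = S * (J * Sᵀ * J) * (J * G * S) := by
        rw [mul_mul_transpose_mul_eq_one hJ hS, Matrix.one_mul]
    _ = S * (J * (Sᵀ * G * S)) := by
        simp only [Matrix.mul_assoc, ← Matrix.mul_assoc J J, hJ, Matrix.one_mul]
    _ = S * (J * D) := by rw [hD]

theorem mulVec_col_eq_smul_of_mul_eq_mul_diagonal {A S : Matrix n n R} {d : n → R}
    (h : A * S = S * diagonal d) (j : n) :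
    A *ᵥ (fun i => S i j) = d j • fun i => S i j := by
  ext i
  change (A * S) i j = d j * S i j
  rw [h, mul_diagonal, mul_comm]

theorem trace_sq_sub_four_mul_det_eq_of_mul_eq_mul {A B S : Matrix n n R} (hS : IsUnit S)
    (h : A * S = S * B) : A.trace ^ 2 - 4 * A.det = B.trace ^ 2 - 4 * B.det := by
  have hA : A = S * B * S⁻¹ := by
    rw [← h, mul_nonsing_inv_cancel_right _ _ ((isUnit_iff_isUnit_det S).mp hS)]
  rw [hA, trace_conj hS, det_conj hS]

end Matrix

theorem Real.exists_mul_sinh_add_mul_cosh_eq_zero {x y : ℝ} (h : |y| < |x|) :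
    ∃ τ, x * Real.sinh τ + y * Real.cosh τ = 0 := by
  have hx : x ≠ 0 := abs_pos.mp ((abs_nonneg y).trans_lt h)
  have hu : -y / x ∈ Set.Ioo (-1) 1 := by
    rw [Set.mem_Ioo, ← abs_lt, abs_div, abs_neg, div_lt_one (abs_pos.mpr hx)]
    exact h
  refine ⟨Real.artanh (-y / x), ?_⟩
  rw [Real.sinh_artanh hu, Real.cosh_artanh hu]
  field_simp
  ring

theorem Jmat_mul_Jmat : Jmat * Jmat = 1 := by
  rw [Jmat, mul_fin_two, one_fin_two]
  norm_num

theorem Jmat_mul_diag (a b : ℝ) : Jmat * !![a, 0; 0, b] = diagonal ![a, -b] := by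
  rw [Jmat, mul_fin_two, diagonal_fin_two]
  simp

theorem trace_sq_sub_four_mul_det_Jmat_mul (G : Matrix (Fin 2) (Fin 2) ℝ) (hG : Gᵀ = G) :
    (Jmat * G).trace ^ 2 - 4 * (Jmat * G).det = (G 0 0 + G 1 1) ^ 2 - (2 * G 0 1) ^ 2 := by
  have h10 : G 1 0 = G 0 1 := (congr_fun (congr_fun hG 1) 0).symm
  rw [Jmat, eta_fin_two G, mul_fin_two, trace_fin_two_of, det_fin_two_of]
  simp only [of_apply, cons_val', cons_val_zero, cons_val_one, empty_val', cons_val_fin_one, h10]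
  ring

theorem trace_sq_sub_four_mul_det_diagonal (a b : ℝ) :
    (diagonal ![a, -b]).trace ^ 2 - 4 * (diagonal ![a, -b]).det = (a + b) ^ 2 := by
  simp only [trace_diagonal, det_diagonal, Fin.sum_univ_two, Fin.prod_univ_two, cons_val_zero,
    cons_val_one, cons_val_fin_one]
  ring

noncomputable def lorentzBoost (t : ℝ) : Matrix (Fin 2) (Fin 2) ℝ :=
  !![Real.cosh t, Real.sinh t; Real.sinh t, Real.cosh t]

theorem lorentzBoost_transpose_mul_Jmat_mul (t : ℝ) :
    (lorentzBoost t)ᵀ * Jmat * lorentzBoost t = Jmat := by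
  ext i j
  fin_cases i <;> fin_cases j <;>
    simp [lorentzBoost, Jmat, mul_apply, Fin.sum_univ_two, ← sq, Real.cosh_sq', mul_comm]

theorem two_mul_lorentzBoost_transpose_mul_mul_apply_zero_one (G : Matrix (Fin 2) (Fin 2) ℝ)
    (hG : Gᵀ = G) (t : ℝ) :
    2 * ((lorentzBoost t)ᵀ * G * lorentzBoost t) 0 1 =
      (G 0 0 + G 1 1) * Real.sinh (2 * t) + 2 * G 0 1 * Real.cosh (2 * t) := by
  have h10 : G 1 0 = G 0 1 := (congr_fun (congr_fun hG 1) 0).symm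
  simp only [lorentzBoost, mul_apply, transpose_apply, of_apply, cons_val', cons_val_zero,
    cons_val_one, cons_val_fin_one, Fin.sum_univ_two, h10, Real.sinh_two_mul, Real.cosh_two_mul]
  ring

theorem exists_lorentzBoost_transpose_mul_mul_eq_diag (G : Matrix (Fin 2) (Fin 2) ℝ)
    (hG : Gᵀ = G) (h : (2 * G 0 1) ^ 2 < (G 0 0 + G 1 1) ^ 2) :
    ∃ t a b : ℝ, (lorentzBoost t)ᵀ * G * lorentzBoost t = !![a, 0; 0, b] := by
  obtain ⟨τ, hτ⟩ := Real.exists_mul_sinh_add_mul_cosh_eq_zero (sq_lt_sq.mp h)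
  set D := (lorentzBoost (τ / 2))ᵀ * G * lorentzBoost (τ / 2) with hD
  have h01 : D 0 1 = 0 := by
    have := two_mul_lorentzBoost_transpose_mul_mul_apply_zero_one G hG (τ / 2)
    rw [mul_div_cancel₀ τ two_ne_zero, hτ] at this
    linarith
  have hDsymm : Dᵀ = D := by
    rw [hD, transpose_mul, transpose_mul, transpose_transpose, hG, Matrix.mul_assoc]
  have h10 : D 1 0 = 0 := by rw [← hDsymm, transpose_apply, h01]
  exact ⟨τ / 2, D 0 0, D 1 1, (eta_fin_two D).trans (by rw [h01, h10])⟩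

/-- Theorem 3.1: if `(tr F)² > 4 det F` for the associated operator `F = J * G`, then in a
basis composed of eigenvectors of `F` the metrics are given by `diag(1,-1)` and `diag(a,b)`
with `a + b ≠ 0`. -/
theorem canonical_form_real_distinct_eigenvalues (G : Matrix (Fin 2) (Fin 2) ℝ) (hG : Gᵀ = G)
    (F : Matrix (Fin 2) (Fin 2) ℝ) (hF : F = Jmat * G)
    (h : F.trace ^ 2 > 4 * F.det) :
    ∃ S : Matrix (Fin 2) (Fin 2) ℝ, ∃ a b : ℝ, IsUnit S ∧ b ≠ -a ∧
      Sᵀ * Jmat * S = Jmat ∧ Sᵀ * G * S = !![a, 0; 0, b] ∧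
      ∃ l₀ l₁ : ℝ, F.mulVec (fun i => S i 0) = l₀ • (fun i => S i 0) ∧
        F.mulVec (fun i => S i 1) = l₁ • (fun i => S i 1) := by
  have hdisc : (2 * G 0 1) ^ 2 < (G 0 0 + G 1 1) ^ 2 := by
    have := trace_sq_sub_four_mul_det_Jmat_mul G hG
    rw [← hF] at this
    linarith
  obtain ⟨t, a, b, hD⟩ := exists_lorentzBoost_transpose_mul_mul_eq_diag G hG hdisc
  have hJ := lorentzBoost_transpose_mul_Jmat_mul t
  have hS : IsUnit (lorentzBoost t) := isUnit_of_transpose_mul_mul_eq Jmat_mul_Jmat hJ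
  have hFS : F * lorentzBoost t = lorentzBoost t * diagonal ![a, -b] := by
    rw [hF, ← Jmat_mul_diag]
    exact mul_mul_eq_mul_mul_of_transpose_mul_mul_eq Jmat_mul_Jmat hJ hD
  have hab : 0 < (a + b) ^ 2 := by
    rw [← trace_sq_sub_four_mul_det_diagonal, ← trace_sq_sub_four_mul_det_eq_of_mul_eq_mul hS hFS]
    linarith
  refine ⟨lorentzBoost t, a, b, hS, ?_, hJ, hD, a, -b,
    mulVec_col_eq_smul_of_mul_eq_mul_diagonal hFS 0, mulVec_col_eq_smul_of_mul_eq_mul_diagonal hFS 1⟩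
  rintro rfl
  simp at hab
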